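/- Existence of projectivities: Given any three distinct points P, Q, R on a line l, and any three distinct points P', Q', R' on a line m, there exists a projectivity π from the range of l to the range of m such that π(P) = P', π(Q) = Q', and π(R) = R'. -/

import Mathlib

open Configuration

universe u
variable (P L : Type u) [Membership P L]

/-- Three points are collinear if some line passes through all three. -/
def Col (A B C : P) : Prop := ∃ l : L, A ∈ l ∧ B ∈ l ∧ C ∈ l

/-- Every line of `L` is incident with at least `n` distinct points. -/
def LinesHaveAtLeast (n : ℕ) : Prop :=
  ∀ l : L, ∃ s : Finset P, n ≤ s.card ∧ ∀ X ∈ s, X ∈ l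

/-- The range of a line `l` : the points incident with `l`. -/
abbrev Rng (l : L) : Type _ := {X : P // X ∈ l}

/-- `f` is the perspectivity from the range of `l` to the range of `m` with
center `O`, a point outside both `l` and `m` : each point `X` of `l` is mapped
to the point `(OX)·m`, i.e. `O`, `X` and `f X` are collinear. -/
def IsPerspectivity (l m : L) (f : Rng P L l → Rng P L m) : Prop :=
  ∃ O : P, O ∉ l ∧ O ∉ m ∧
    ∀ X : Rng P L l, ∃ k : L, O ∈ k ∧ (X : P) ∈ k ∧ ((f X : P)) ∈ k

/-- A projectivity between ranges of lines : a composite of finitely many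
perspectivities. -/
inductive IsProjectivity : (l m : L) → (Rng P L l → Rng P L m) → Prop where
  | persp {l m : L} {f : Rng P L l → Rng P L m} :
      IsPerspectivity P L l m f → IsProjectivity l m f
  | comp {l m n : L} {f : Rng P L l → Rng P L m} {g : Rng P L m → Rng P L n} :
      IsProjectivity l m f → IsProjectivity m n g → IsProjectivity l n (g ∘ f)

/- Move `A` to the target point `A'` by a perspectivity onto a line `n` through `A'`; the
images `B₁, C₁` on `n` are then sent to `B', C'` by a perspectivity `n → m` fixing `A' = n·m`,
with center `B₁B' · C₁C'`. If `A'` lies on `l`, first pass through an auxiliary line avoiding `A'`. -/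

open Configuration.HasPoints (mkPoint mkPoint_ax)
open Configuration.HasLines (mkLine mkLine_ax)

section Incidence

variable {P L} [Nondegenerate P L]

theorem line_eq_of_mem_of_mem {A B : P} {l k : L} (hAB : A ≠ B) (hAl : A ∈ l) (hBl : B ∈ l)
    (hAk : A ∈ k) (hBk : B ∈ k) : l = k :=
  (Nondegenerate.eq_or_eq hAl hBl hAk hBk).resolve_left hAB

theorem point_eq_of_mem_of_mem {A B : P} {l k : L} (hlk : l ≠ k) (hAl : A ∈ l) (hAk : A ∈ k)
    (hBl : B ∈ l) (hBk : B ∈ k) : A = B :=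
  (Nondegenerate.eq_or_eq hAl hBl hAk hBk).resolve_right hlk

theorem not_mem_of_lines_meet_distinct {O B C : P} {b c n : L} (hBC : B ≠ C) (hbn : b ≠ n)
    (hcn : c ≠ n) (hOb : O ∈ b) (hOc : O ∈ c) (hBb : B ∈ b) (hBn : B ∈ n) (hCc : C ∈ c)
    (hCn : C ∈ n) : O ∉ n := fun hOn =>
  hBC ((point_eq_of_mem_of_mem hbn hOb hOn hBb hBn).symm.trans
    (point_eq_of_mem_of_mem hcn hOc hOn hCc hCn))

end Incidence

section LinesHaveAtLeast

variable {P L}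

theorem LinesHaveAtLeast.mono {m n : ℕ} (h : LinesHaveAtLeast P L n) (hmn : m ≤ n) :
    LinesHaveAtLeast P L m := fun l =>
  let ⟨s, hs, hsl⟩ := h l
  ⟨s, hmn.trans hs, hsl⟩

theorem LinesHaveAtLeast.exists_mem_ne_ne (h3 : LinesHaveAtLeast P L 3) (l : L) (a b : P) :
    ∃ X : P, X ∈ l ∧ X ≠ a ∧ X ≠ b := by
  classical
  obtain ⟨s, hs, hsl⟩ := h3 l
  have hab : ({a, b} : Finset P).card < s.card :=
    (Finset.card_le_two).trans_lt (by omega)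
  obtain ⟨X, hXs, hXab⟩ := Finset.exists_mem_notMem_of_card_lt_card hab
  simp only [Finset.mem_insert, Finset.mem_singleton, not_or] at hXab
  exact ⟨X, hsl X hXs, hXab⟩

end LinesHaveAtLeast

section ProjectivePlane

variable {P L} [ProjectivePlane P L]

noncomputable def perspectivity (l m : L) (O : P) (hOl : O ∉ l) (hOm : O ∉ m) :
    Rng P L l → Rng P L m := fun X =>
  have hOX : O ≠ X := fun h => hOl (h ▸ X.2)
  have hm : mkLine hOX ≠ m := fun h => hOm (h ▸ (mkLine_ax hOX).1)
  ⟨mkPoint hm, (mkPoint_ax hm).2⟩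

variable {l m : L} {O : P} (hOl : O ∉ l) (hOm : O ∉ m)

theorem perspectivity_spec (X : Rng P L l) :
    ∃ k : L, O ∈ k ∧ (X : P) ∈ k ∧ (perspectivity l m O hOl hOm X : P) ∈ k := by
  have hOX : O ≠ X := fun h => hOl (h ▸ X.2)
  have hm : mkLine hOX ≠ m := fun h => hOm (h ▸ (mkLine_ax hOX).1)
  exact ⟨mkLine hOX, (mkLine_ax hOX).1, (mkLine_ax hOX).2, (mkPoint_ax hm).1⟩

theorem isPerspectivity_perspectivity :
    IsPerspectivity P L l m (perspectivity l m O hOl hOm) :=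
  ⟨O, hOl, hOm, perspectivity_spec hOl hOm⟩

theorem perspectivity_apply_eq {X : Rng P L l} {Y : P} (hYm : Y ∈ m) {k : L} (hOk : O ∈ k)
    (hXk : (X : P) ∈ k) (hYk : Y ∈ k) : perspectivity l m O hOl hOm X = ⟨Y, hYm⟩ := by
  obtain ⟨k', hOk', hXk', hZk'⟩ := perspectivity_spec hOl hOm X
  have hOX : O ≠ X := fun h => hOl (h ▸ X.2)
  have hk' : k' = k := line_eq_of_mem_of_mem hOX hOk' hXk' hOk hXk
  have hkm : k ≠ m := fun h => hOm (h ▸ hOk)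
  exact Subtype.ext (point_eq_of_mem_of_mem hkm (hk' ▸ hZk') (perspectivity l m O hOl hOm X).2
    hYk hYm)

theorem perspectivity_leftInverse :
    Function.LeftInverse (perspectivity m l O hOm hOl) (perspectivity l m O hOl hOm) := fun X =>
  let ⟨_, hOk, hXk, hYk⟩ := perspectivity_spec hOl hOm X
  perspectivity_apply_eq hOm hOl X.2 hOk hYk hXk

theorem perspectivity_injective : Function.Injective (perspectivity l m O hOl hOm) :=
  (perspectivity_leftInverse hOl hOm).injective

end ProjectivePlane

def ProjectsTo {l m : L} (A B C : Rng P L l) (A' B' C' : Rng P L m) : Prop :=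
  ∃ f : Rng P L l → Rng P L m, IsProjectivity P L l m f ∧ f A = A' ∧ f B = B' ∧ f C = C'

section ProjectsTo

variable {P L}

theorem ProjectsTo.trans {l m n : L} {A B C : Rng P L l} {A' B' C' : Rng P L m}
    {A'' B'' C'' : Rng P L n} (h : ProjectsTo P L A B C A' B' C')
    (h' : ProjectsTo P L A' B' C' A'' B'' C'') : ProjectsTo P L A B C A'' B'' C'' := by
  obtain ⟨f, hf, rfl, rfl, rfl⟩ := h
  obtain ⟨g, hg, rfl, rfl, rfl⟩ := h'
  exact ⟨g ∘ f, hf.comp hg, rfl, rfl, rfl⟩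

variable [ProjectivePlane P L]

theorem exists_perspective_triple {l n : L} {A B C : Rng P L l} (hAB : A ≠ B) (hAC : A ≠ C)
    (hBC : B ≠ C) (h3 : LinesHaveAtLeast P L 3) {A₁ : P} (hA₁n : A₁ ∈ n)
    (hA₁l : A₁ ∉ l) (hAn : (A : P) ∉ n) :
    ∃ B₁ C₁ : Rng P L n, ProjectsTo P L A B C ⟨A₁, hA₁n⟩ B₁ C₁ ∧
      ⟨A₁, hA₁n⟩ ≠ B₁ ∧ ⟨A₁, hA₁n⟩ ≠ C₁ ∧ B₁ ≠ C₁ := by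
  have hAA₁ : (A : P) ≠ A₁ := fun h => hA₁l (h ▸ A.2)
  set a : L := mkLine hAA₁
  obtain ⟨hAa, hA₁a⟩ : (A : P) ∈ a ∧ A₁ ∈ a := mkLine_ax hAA₁
  have hal : a ≠ l := fun h => hA₁l (h ▸ hA₁a)
  have han : a ≠ n := fun h => hAn (h ▸ hAa)
  obtain ⟨O, hOa, hOA, hOA₁⟩ := h3.exists_mem_ne_ne a A A₁
  have hOl : O ∉ l := fun h => hOA (point_eq_of_mem_of_mem hal hOa h hAa A.2)
  have hOn : O ∉ n := fun h => hOA₁ (point_eq_of_mem_of_mem han hOa h hA₁a hA₁n)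
  set f := perspectivity l n O hOl hOn
  have hfA : f A = ⟨A₁, hA₁n⟩ := perspectivity_apply_eq hOl hOn hA₁n hOa hAa hA₁a
  have hf := perspectivity_injective hOl hOn
  refine ⟨f B, f C, ⟨f, .persp (isPerspectivity_perspectivity hOl hOn), hfA, rfl, rfl⟩,
    hfA ▸ hf.ne hAB, hfA ▸ hf.ne hAC, hf.ne hBC⟩

theorem projectsTo_of_common_point {n m : L} (hnm : n ≠ m) {A : P} (hAn : A ∈ n) (hAm : A ∈ m)
    {B C : Rng P L n} {B' C' : Rng P L m} (hAB : A ≠ B) (hAC : A ≠ C) (hBC : B ≠ C)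
    (hAB' : A ≠ B') (hAC' : A ≠ C') (hBC' : B' ≠ C') :
    ProjectsTo P L ⟨A, hAn⟩ B C ⟨A, hAm⟩ B' C' := by
  have hBm : (B : P) ∉ m := fun h => hAB (point_eq_of_mem_of_mem hnm hAn hAm B.2 h)
  have hCm : (C : P) ∉ m := fun h => hAC (point_eq_of_mem_of_mem hnm hAn hAm C.2 h)
  have hB'n : (B' : P) ∉ n := fun h => hAB' (point_eq_of_mem_of_mem hnm hAn hAm h B'.2)
  have hC'n : (C' : P) ∉ n := fun h => hAC' (point_eq_of_mem_of_mem hnm hAn hAm h C'.2)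
  have hBB' : (B : P) ≠ B' := fun h => hBm (h ▸ B'.2)
  have hCC' : (C : P) ≠ C' := fun h => hCm (h ▸ C'.2)
  set b : L := mkLine hBB'
  set c : L := mkLine hCC'
  obtain ⟨hBb, hB'b⟩ : (B : P) ∈ b ∧ (B' : P) ∈ b := mkLine_ax hBB'
  obtain ⟨hCc, hC'c⟩ : (C : P) ∈ c ∧ (C' : P) ∈ c := mkLine_ax hCC'
  have hbn : b ≠ n := fun h => hB'n (h ▸ hB'b)
  have hcn : c ≠ n := fun h => hC'n (h ▸ hC'c)
  have hbm : b ≠ m := fun h => hBm (h ▸ hBb)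
  have hcm : c ≠ m := fun h => hCm (h ▸ hCc)
  have hbc : b ≠ c := fun h =>
    hbn (line_eq_of_mem_of_mem (Subtype.coe_ne_coe.mpr hBC) hBb (h ▸ hCc) B.2 C.2)
  set O : P := mkPoint hbc
  obtain ⟨hOb, hOc⟩ : O ∈ b ∧ O ∈ c := mkPoint_ax hbc
  have hOn := not_mem_of_lines_meet_distinct (Subtype.coe_ne_coe.mpr hBC) hbn hcn hOb hOc
    hBb B.2 hCc C.2
  have hOm := not_mem_of_lines_meet_distinct (Subtype.coe_ne_coe.mpr hBC') hbm hcm hOb hOc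
    hB'b B'.2 hC'c C'.2
  have hOA : O ≠ A := fun h => hOn (h ▸ hAn)
  refine ⟨_, .persp (isPerspectivity_perspectivity hOn hOm), ?_, ?_, ?_⟩
  · exact perspectivity_apply_eq hOn hOm hAm (mkLine_ax hOA).1 (mkLine_ax hOA).2 (mkLine_ax hOA).2
  · exact perspectivity_apply_eq hOn hOm B'.2 hOb hBb hB'b
  · exact perspectivity_apply_eq hOn hOm C'.2 hOc hCc hC'c

theorem projectsTo_of_not_mem {l m : L} {A B C : Rng P L l} {A' B' C' : Rng P L m}
    (hAB : A ≠ B) (hAC : A ≠ C) (hBC : B ≠ C) (hAB' : A' ≠ B') (hAC' : A' ≠ C') (hBC' : B' ≠ C')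
    (h3 : LinesHaveAtLeast P L 3) (hA'l : (A' : P) ∉ l) : ProjectsTo P L A B C A' B' C' := by
  have hlm : l ≠ m := fun h => hA'l (h ▸ A'.2)
  obtain ⟨Y, hYl, hYA, hYlm⟩ := h3.exists_mem_ne_ne l A (mkPoint hlm)
  have hYm : Y ∉ m := fun h =>
    hYlm (point_eq_of_mem_of_mem hlm hYl h (mkPoint_ax hlm).1 (mkPoint_ax hlm).2)
  have hA'Y : (A' : P) ≠ Y := fun h => hA'l (h ▸ hYl)
  set n : L := mkLine hA'Y
  obtain ⟨hA'n, hYn⟩ : (A' : P) ∈ n ∧ Y ∈ n := mkLine_ax hA'Y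
  have hnm : n ≠ m := fun h => hYm (h ▸ hYn)
  have hAn : (A : P) ∉ n := fun h =>
    hA'l (line_eq_of_mem_of_mem hYA.symm h hYn A.2 hYl ▸ hA'n)
  obtain ⟨B₁, C₁, hproj, hA'B₁, hA'C₁, hB₁C₁⟩ :=
    exists_perspective_triple hAB hAC hBC h3 hA'n hA'l hAn
  exact hproj.trans <| projectsTo_of_common_point hnm hA'n A'.2
    (Subtype.coe_ne_coe.mpr hA'B₁) (Subtype.coe_ne_coe.mpr hA'C₁) hB₁C₁
    (Subtype.coe_ne_coe.mpr hAB') (Subtype.coe_ne_coe.mpr hAC') hBC'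

theorem projectsTo_of_ne {l m : L} {A B C : Rng P L l} {A' B' C' : Rng P L m}
    (hAB : A ≠ B) (hAC : A ≠ C) (hBC : B ≠ C) (hAB' : A' ≠ B') (hAC' : A' ≠ C') (hBC' : B' ≠ C')
    (h3 : LinesHaveAtLeast P L 3) : ProjectsTo P L A B C A' B' C' := by
  by_cases hA'l : (A' : P) ∉ l
  · exact projectsTo_of_not_mem hAB hAC hBC hAB' hAC' hBC' h3 hA'l
  rw [not_not] at hA'l
  obtain ⟨n, hA'n⟩ := Nondegenerate.exists_line (L := L) (A' : P)
  have hnl : n ≠ l := fun h => hA'n (h ▸ hA'l)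
  obtain ⟨A₁, hA₁n, hA₁nl, -⟩ := h3.exists_mem_ne_ne n (mkPoint hnl) (mkPoint hnl)
  have hA₁l : A₁ ∉ l := fun h =>
    hA₁nl (point_eq_of_mem_of_mem hnl hA₁n h (mkPoint_ax hnl).1 (mkPoint_ax hnl).2)
  obtain ⟨B₁, hB₁n, hB₁A₁, -⟩ := h3.exists_mem_ne_ne n A₁ A₁
  obtain ⟨C₁, hC₁n, hC₁A₁, hC₁B₁⟩ := h3.exists_mem_ne_ne n A₁ B₁
  have hA₁B₁ : (⟨A₁, hA₁n⟩ : Rng P L n) ≠ ⟨B₁, hB₁n⟩ := Subtype.coe_ne_coe.mp hB₁A₁.symm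
  have hA₁C₁ : (⟨A₁, hA₁n⟩ : Rng P L n) ≠ ⟨C₁, hC₁n⟩ := Subtype.coe_ne_coe.mp hC₁A₁.symm
  have hB₁C₁ : (⟨B₁, hB₁n⟩ : Rng P L n) ≠ ⟨C₁, hC₁n⟩ := Subtype.coe_ne_coe.mp hC₁B₁.symm
  exact (projectsTo_of_not_mem hAB hAC hBC hA₁B₁ hA₁C₁ hB₁C₁ h3 hA₁l).trans
    (projectsTo_of_not_mem hA₁B₁ hA₁C₁ hB₁C₁ hAB' hAC' hBC' h3 hA'n)

end ProjectsTo

/-- **Existence of projectivities.** Given any three distinct points `A, B, C`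
on a line `l`, and any three distinct points `A', B', C'` on a line `m`, there
exists a projectivity `f` from the range of `l` to the range of `m` such that
`f A = A'`, `f B = B'` and `f C = C'`. -/
theorem projectivity_exists
    [Configuration.ProjectivePlane P L]
    (h6 : LinesHaveAtLeast P L 6)
    (l m : L)
    (A B C : P) (hA : A ∈ l) (hB : B ∈ l) (hC : C ∈ l)
    (hAB : A ≠ B) (hAC : A ≠ C) (hBC : B ≠ C)
    (A' B' C' : P) (hA' : A' ∈ m) (hB' : B' ∈ m) (hC' : C' ∈ m)
    (hAB' : A' ≠ B') (hAC' : A' ≠ C') (hBC' : B' ≠ C') :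
    ∃ f : Rng P L l → Rng P L m, IsProjectivity P L l m f ∧
      f ⟨A, hA⟩ = ⟨A', hA'⟩ ∧ f ⟨B, hB⟩ = ⟨B', hB'⟩ ∧ f ⟨C, hC⟩ = ⟨C', hC'⟩ :=
  projectsTo_of_ne (Subtype.coe_ne_coe.mp hAB) (Subtype.coe_ne_coe.mp hAC)
    (Subtype.coe_ne_coe.mp hBC) (Subtype.coe_ne_coe.mp hAB') (Subtype.coe_ne_coe.mp hAC')
    (Subtype.coe_ne_coe.mp hBC') (h6.mono (by norm_num))
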